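/- arXiv:2302.03247 — 2 statements merged into one kernel-verified Lean document; each statement's English description precedes it below -/
import Mathlib

section
/- For all real numbers h > 0 and P > 0, ∫₀^P [ (p² + 2h²) / ( p² · √(p² + h²) ) − 2h / p² ] dp = ln( (P + √(P² + h²)) / h ) − 2P / ( √(P² + h²) + h ). -/
/-!
With `s = √(p² + h²)`, the numerator `p² + 2h² − 2hs` of the integrand equals `(s − h)²` and
`p² = (s − h)(s + h)`, so the two terms singular at `p = 0` combine into
`(s − h) / (s (s + h)) = 1 / s − 2h / (s (s + h))`, which is continuous. Its primitive is
`log ((p + s) / h) − 2p / (s + h)`: the first term differentiates to `1 / s`, the second to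
`2h / (s (s + h))` because `s² − p² = h²`. Both vanish at `p = 0`.
-/

open Real

section
variable {h : ℝ}

lemma neg_lt_sqrt_sq_add_sq (hh : h ≠ 0) (p : ℝ) : -p < √(p ^ 2 + h ^ 2) :=
  lt_sqrt_of_sq_lt (by rw [neg_sq]; exact lt_add_of_pos_right _ (by positivity))

lemma hasDerivAt_sqrt_sq_add_sq (hh : h ≠ 0) (p : ℝ) :
    HasDerivAt (fun p => √(p ^ 2 + h ^ 2)) (p / √(p ^ 2 + h ^ 2)) p := by
  have hs : √(p ^ 2 + h ^ 2) ≠ 0 := by positivity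
  refine (((hasDerivAt_pow 2 p).add_const (h ^ 2)).sqrt (by positivity)).congr_deriv ?_
  field_simp
  norm_num

lemma hasDerivAt_log_add_sqrt_sq_add_sq (hh : h ≠ 0) (p : ℝ) :
    HasDerivAt (fun p => log ((p + √(p ^ 2 + h ^ 2)) / h)) (1 / √(p ^ 2 + h ^ 2)) p := by
  have hs : √(p ^ 2 + h ^ 2) ≠ 0 := by positivity
  have hps : p + √(p ^ 2 + h ^ 2) ≠ 0 := by linarith [neg_lt_sqrt_sq_add_sq hh p]
  have hinner : HasDerivAt (fun p => (p + √(p ^ 2 + h ^ 2)) / h)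
      ((1 + p / √(p ^ 2 + h ^ 2)) / h) p :=
    ((hasDerivAt_id' p).add (hasDerivAt_sqrt_sq_add_sq hh p)).div_const h
  refine (hinner.log (div_ne_zero hps hh)).congr_deriv ?_
  field_simp
  ring

lemma hasDerivAt_two_mul_div_sqrt_sq_add_sq_add (hh : 0 < h) (p : ℝ) :
    HasDerivAt (fun p => 2 * p / (√(p ^ 2 + h ^ 2) + h))
      (2 * h / (√(p ^ 2 + h ^ 2) * (√(p ^ 2 + h ^ 2) + h))) p := by
  have hsq : √(p ^ 2 + h ^ 2) ^ 2 = p ^ 2 + h ^ 2 := sq_sqrt (by positivity)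
  have hs : 0 < √(p ^ 2 + h ^ 2) := by positivity
  refine (((hasDerivAt_id' p).const_mul 2).div
    ((hasDerivAt_sqrt_sq_add_sq hh.ne' p).add_const h) (by positivity)).congr_deriv ?_
  field_simp
  linear_combination hsq

lemma div_sq_mul_sqrt_sub_div_sq_eq (hh : 0 < h) (p : ℝ) :
    (p ^ 2 + 2 * h ^ 2) / (p ^ 2 * √(p ^ 2 + h ^ 2)) - 2 * h / p ^ 2
      = 1 / √(p ^ 2 + h ^ 2) - 2 * h / (√(p ^ 2 + h ^ 2) * (√(p ^ 2 + h ^ 2) + h)) := by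
  rcases eq_or_ne p 0 with rfl | hp
  · -- at `p = 0` the left side is the junk value `0` (division by zero), and so is the right side
    simp [sqrt_sq hh.le]
    field_simp
    ring
  have hsq : √(p ^ 2 + h ^ 2) ^ 2 = p ^ 2 + h ^ 2 := sq_sqrt (by positivity)
  have hs : 0 < √(p ^ 2 + h ^ 2) := by positivity
  field_simp
  linear_combination (-2 * h) * hsq

end

theorem stmt_13_general (h P : ℝ) (hh : 0 < h) :
    ∫ p in (0:ℝ)..P,
        ((p ^ 2 + 2 * h ^ 2) / (p ^ 2 * Real.sqrt (p ^ 2 + h ^ 2)) - 2 * h / p ^ 2)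
      = Real.log ((P + Real.sqrt (P ^ 2 + h ^ 2)) / h)
          - 2 * P / (Real.sqrt (P ^ 2 + h ^ 2) + h) := by
  have hderiv (p : ℝ) := (hasDerivAt_log_add_sqrt_sq_add_sq hh.ne' p).sub
    (hasDerivAt_two_mul_div_sqrt_sq_add_sq_add hh p)
  have hcont : Continuous fun p => 1 / √(p ^ 2 + h ^ 2)
      - 2 * h / (√(p ^ 2 + h ^ 2) * (√(p ^ 2 + h ^ 2) + h)) := by
    fun_prop (disch := intro; positivity)
  simp_rw [div_sq_mul_sqrt_sub_div_sq_eq hh]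
  rw [intervalIntegral.integral_eq_sub_of_hasDerivAt (fun p _ => hderiv p)
    (hcont.intervalIntegrable 0 P)]
  simp [sqrt_sq hh.le, hh.ne']

/-- Level-3 PBF integral for the double-layer kernel (cases #6, #7):
∫₀^P [(p²+2h²)/(p²√(p²+h²)) − 2h/p²] dp
  = ln((P+√(P²+h²))/h) − 2P/(√(P²+h²)+h). -/
theorem stmt_13 (h P : ℝ) (hh : 0 < h) (hP : 0 < P) :
    ∫ p in (0:ℝ)..P,
        ((p ^ 2 + 2 * h ^ 2) / (p ^ 2 * Real.sqrt (p ^ 2 + h ^ 2)) - 2 * h / p ^ 2)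
      = Real.log ((P + Real.sqrt (P ^ 2 + h ^ 2)) / h)
          - 2 * P / (Real.sqrt (P ^ 2 + h ^ 2) + h) :=
  stmt_13_general h P hh
end

section
/- For all real numbers h1 > 0, h4 > 0, and P > 0, setting h = √(h1² + h4²), R1(p) = √(p² + h1²), R4(p) = √(p² + h²), ∫₀^P (1/(p² + h1²)) · [ 1/(R4(p) + h4) − (1/R1(p)) · ln( (R1(p) + R4(p)) / h4 ) + 1/(2h4) ] dp = (1/h1²) · [ ln( (P + R4(P)) / h ) + ((h1² − h4²)/(2·h1·h4)) · arctan( h1·P / (h² + h4·R4(P)) ) − (P/R1(P)) · ln( (R1(P) + R4(P)) / h4 ) + P / ( 2·(R4(P) + h4) ) ]. -/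
/-!
With `R₁ = √(p² + h₁²)` and `R₄ = √(p² + h₁² + h₄²)`, the right-hand side is an explicit
antiderivative of the integrand that vanishes at `P = 0`. Each of its four terms is differentiated
separately; after clearing denominators the logarithmic terms cancel and the remainder vanishes
modulo `R₁² = p² + h₁²` and `R₄² = R₁² + h₄²`. The fundamental theorem of calculus concludes.
-/

open Real

section SqrtSqAdd

variable {c : ℝ} (hc : 0 < c) (x : ℝ)
include hc

theorem hasDerivAt_sqrt_sq_add :
    HasDerivAt (fun p : ℝ => √(p ^ 2 + c)) (x / √(x ^ 2 + c)) x := by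
  refine (((hasDerivAt_pow 2 x).add_const c).sqrt (by positivity)).congr_deriv ?_
  field_simp
  norm_num

theorem hasDerivAt_div_sqrt_sq_add :
    HasDerivAt (fun p : ℝ => p / √(p ^ 2 + c)) (c / √(x ^ 2 + c) ^ 3) x := by
  have hR : 0 < √(x ^ 2 + c) := sqrt_pos.mpr (by positivity)
  have hR2 : √(x ^ 2 + c) ^ 2 = x ^ 2 + c := sq_sqrt (by positivity)
  refine (hasDerivAt_id' x |>.fun_div (hasDerivAt_sqrt_sq_add hc x) hR.ne').congr_deriv ?_
  field_simp
  linear_combination hR2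

theorem hasDerivAt_log_add_sqrt_sq_add_div {d : ℝ} (hd : d ≠ 0) :
    HasDerivAt (fun p : ℝ => log ((p + √(p ^ 2 + c)) / d)) (1 / √(x ^ 2 + c)) x := by
  have hxR : 0 < x + √(x ^ 2 + c) := by
    have : |x| < √(x ^ 2 + c) := by
      rw [← sqrt_sq_eq_abs]; exact sqrt_lt_sqrt (sq_nonneg x) (by linarith)
    linarith [neg_abs_le x]
  refine ((((hasDerivAt_id' x).fun_add (hasDerivAt_sqrt_sq_add hc x)).div_const d).log
    (div_ne_zero hxR.ne' hd)).congr_deriv ?_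
  field_simp
  ring

theorem hasDerivAt_div_two_mul_sqrt_sq_add_add {b : ℝ} (hb : 0 ≤ b) :
    HasDerivAt (fun p : ℝ => p / (2 * (√(p ^ 2 + c) + b)))
      ((c + b * √(x ^ 2 + c)) / (2 * √(x ^ 2 + c) * (√(x ^ 2 + c) + b) ^ 2)) x := by
  have hR : 0 < √(x ^ 2 + c) := sqrt_pos.mpr (by positivity)
  have hR2 : √(x ^ 2 + c) ^ 2 = x ^ 2 + c := sq_sqrt (by positivity)
  refine ((hasDerivAt_id' x).fun_div (((hasDerivAt_sqrt_sq_add hc x).add_const b).const_mul 2)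
    (by positivity)).congr_deriv ?_
  generalize √(x ^ 2 + c) = R at hR hR2 ⊢
  obtain rfl : c = R ^ 2 - x ^ 2 := by linarith
  field_simp
  ring

end SqrtSqAdd

theorem hasDerivAt_log_sqrt_sq_add_add_sqrt_sq_add_div {c₁ c₂ d : ℝ} (hc₁ : 0 < c₁)
    (hc₂ : 0 < c₂) (hd : d ≠ 0) (x : ℝ) :
    HasDerivAt (fun p : ℝ => log ((√(p ^ 2 + c₁) + √(p ^ 2 + c₂)) / d))
      (x / (√(x ^ 2 + c₁) * √(x ^ 2 + c₂))) x := by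
  refine ((((hasDerivAt_sqrt_sq_add hc₁ x).fun_add (hasDerivAt_sqrt_sq_add hc₂ x)).div_const
    d).log (div_ne_zero (by positivity) hd)).congr_deriv ?_
  field_simp
  ring

theorem hasDerivAt_arctan_div_add_mul_sqrt {a b : ℝ} (hb : 0 < b) (x : ℝ) :
    HasDerivAt
      (fun p : ℝ => arctan (a * p / ((a ^ 2 + b ^ 2) + b * √(p ^ 2 + (a ^ 2 + b ^ 2)))))
      (a / (√(x ^ 2 + (a ^ 2 + b ^ 2)) * (√(x ^ 2 + (a ^ 2 + b ^ 2)) + b))) x := by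
  have hc : 0 < a ^ 2 + b ^ 2 := by positivity
  have hR : 0 < √(x ^ 2 + (a ^ 2 + b ^ 2)) := sqrt_pos.mpr (by positivity)
  have hR2 : √(x ^ 2 + (a ^ 2 + b ^ 2)) ^ 2 = x ^ 2 + (a ^ 2 + b ^ 2) := sq_sqrt (by positivity)
  refine ((((hasDerivAt_id' x).const_mul a).fun_div
    (((hasDerivAt_sqrt_sq_add hc x).const_mul b).const_add _)
    (by positivity)).arctan).congr_deriv ?_
  generalize √(x ^ 2 + (a ^ 2 + b ^ 2)) = R at hR hR2 ⊢
  field_simp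
  linear_combination a * (b * R + a ^ 2 + b ^ 2) * hR2

noncomputable def caseSixIntegrand (h1 h4 p : ℝ) : ℝ :=
  (1 / (p ^ 2 + h1 ^ 2)) *
    (1 / (√(p ^ 2 + (h1 ^ 2 + h4 ^ 2)) + h4)
      - (1 / √(p ^ 2 + h1 ^ 2)) * log ((√(p ^ 2 + h1 ^ 2) + √(p ^ 2 + (h1 ^ 2 + h4 ^ 2))) / h4)
      + 1 / (2 * h4))

/-- The paper's `F₁′(P; h₁, 0, 0, h₄)`. -/
noncomputable def caseSixPrimitive (h1 h4 P : ℝ) : ℝ :=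
  (1 / h1 ^ 2) *
    (log ((P + √(P ^ 2 + (h1 ^ 2 + h4 ^ 2))) / √(h1 ^ 2 + h4 ^ 2))
      + ((h1 ^ 2 - h4 ^ 2) / (2 * h1 * h4)) *
          arctan (h1 * P / ((h1 ^ 2 + h4 ^ 2) + h4 * √(P ^ 2 + (h1 ^ 2 + h4 ^ 2))))
      - (P / √(P ^ 2 + h1 ^ 2)) * log ((√(P ^ 2 + h1 ^ 2) + √(P ^ 2 + (h1 ^ 2 + h4 ^ 2))) / h4)
      + P / (2 * (√(P ^ 2 + (h1 ^ 2 + h4 ^ 2)) + h4)))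

section CaseSix

variable {h1 h4 : ℝ}

theorem hasDerivAt_caseSixPrimitive (hh1 : h1 ≠ 0) (hh4 : 0 < h4) (x : ℝ) :
    HasDerivAt (caseSixPrimitive h1 h4) (caseSixIntegrand h1 h4 x) x := by
  have hc₁ : 0 < h1 ^ 2 := by positivity
  have hc : 0 < h1 ^ 2 + h4 ^ 2 := by positivity
  have hA := hasDerivAt_log_add_sqrt_sq_add_div hc x (sqrt_pos.mpr hc).ne'
  have hB := hasDerivAt_arctan_div_add_mul_sqrt (a := h1) hh4 x
  have hC := (hasDerivAt_div_sqrt_sq_add hc₁ x).fun_mul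
    (hasDerivAt_log_sqrt_sq_add_add_sqrt_sq_add_div hc₁ hc hh4.ne' x)
  have hD := hasDerivAt_div_two_mul_sqrt_sq_add_add hc x hh4.le
  refine ((((hA.fun_add (hB.const_mul ((h1 ^ 2 - h4 ^ 2) / (2 * h1 * h4)))).fun_sub hC).fun_add
    hD).const_mul (1 / h1 ^ 2)).congr_deriv ?_
  have hR₁ : 0 < √(x ^ 2 + h1 ^ 2) := sqrt_pos.mpr (by positivity)
  have hR₄ : 0 < √(x ^ 2 + (h1 ^ 2 + h4 ^ 2)) := sqrt_pos.mpr (by positivity)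
  have hR₁2 : √(x ^ 2 + h1 ^ 2) ^ 2 = x ^ 2 + h1 ^ 2 := sq_sqrt (by positivity)
  have hR₄2 : √(x ^ 2 + (h1 ^ 2 + h4 ^ 2)) ^ 2 = x ^ 2 + (h1 ^ 2 + h4 ^ 2) :=
    sq_sqrt (by positivity)
  unfold caseSixIntegrand
  generalize log ((√(x ^ 2 + h1 ^ 2) + √(x ^ 2 + (h1 ^ 2 + h4 ^ 2))) / h4) = L
  generalize √(x ^ 2 + h1 ^ 2) = R₁ at hR₁ hR₁2 ⊢
  generalize √(x ^ 2 + (h1 ^ 2 + h4 ^ 2)) = R₄ at hR₄ hR₄2 ⊢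
  rw [← hR₁2]
  field_simp
  linear_combination R₁ * (2 * h4 * (R₄ + h4) ^ 2 + h1 ^ 2 * (R₄ + 2 * h4)) * hR₁2
    - R₁ * h1 ^ 2 * (R₄ + 2 * h4) * hR₄2

theorem continuous_caseSixIntegrand (hh1 : h1 ≠ 0) (hh4 : 0 < h4) :
    Continuous (caseSixIntegrand h1 h4) := by
  have hR₁ (p : ℝ) : 0 < √(p ^ 2 + h1 ^ 2) := sqrt_pos.mpr (by positivity)
  have hR₄ (p : ℝ) : 0 < √(p ^ 2 + (h1 ^ 2 + h4 ^ 2)) := sqrt_pos.mpr (by positivity)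
  unfold caseSixIntegrand
  fun_prop (disch := first | (intro p; have := hR₁ p; have := hR₄ p; positivity) |
    (have := hR₁ x; have := hR₄ x; positivity) | positivity)

theorem caseSixPrimitive_zero : caseSixPrimitive h1 h4 0 = 0 := by
  simp [caseSixPrimitive]

end CaseSix

theorem stmt_15_general (h1 h4 P : ℝ) (hh1 : 0 < h1) (hh4 : 0 < h4) :
    (∫ p in (0:ℝ)..P,
        (1 / (p ^ 2 + h1 ^ 2)) *
          (1 / (Real.sqrt (p ^ 2 + (h1 ^ 2 + h4 ^ 2)) + h4)
            - (1 / Real.sqrt (p ^ 2 + h1 ^ 2)) *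
                Real.log ((Real.sqrt (p ^ 2 + h1 ^ 2)
                    + Real.sqrt (p ^ 2 + (h1 ^ 2 + h4 ^ 2))) / h4)
            + 1 / (2 * h4)))
      = (1 / h1 ^ 2) *
          (Real.log ((P + Real.sqrt (P ^ 2 + (h1 ^ 2 + h4 ^ 2)))
                / Real.sqrt (h1 ^ 2 + h4 ^ 2))
            + ((h1 ^ 2 - h4 ^ 2) / (2 * h1 * h4)) *
                Real.arctan (h1 * P
                  / ((h1 ^ 2 + h4 ^ 2) + h4 * Real.sqrt (P ^ 2 + (h1 ^ 2 + h4 ^ 2))))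
            - (P / Real.sqrt (P ^ 2 + h1 ^ 2)) *
                Real.log ((Real.sqrt (P ^ 2 + h1 ^ 2)
                    + Real.sqrt (P ^ 2 + (h1 ^ 2 + h4 ^ 2))) / h4)
            + P / (2 * (Real.sqrt (P ^ 2 + (h1 ^ 2 + h4 ^ 2)) + h4))) := by
  have ftc := intervalIntegral.integral_eq_sub_of_hasDerivAt
    (fun x _ => hasDerivAt_caseSixPrimitive hh1.ne' hh4 x)
    ((continuous_caseSixIntegrand hh1.ne' hh4).intervalIntegrable 0 P)
  rw [caseSixPrimitive_zero, sub_zero] at ftc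
  exact ftc

/-- Level-1 PBF integral for the double-layer kernel (case #6): with
h = √(h₁²+h₄²), R₁(p) = √(p²+h₁²), R₄(p) = √(p²+h²),
∫₀^P (1/(p²+h₁²))[1/(R₄(p)+h₄) − (1/R₁(p)) ln((R₁(p)+R₄(p))/h₄) + 1/(2h₄)] dp
  = (1/h₁²)[ln((P+R₄(P))/h) + ((h₁²−h₄²)/(2h₁h₄)) arctan(h₁P/(h²+h₄R₄(P)))
      − (P/R₁(P)) ln((R₁(P)+R₄(P))/h₄) + P/(2(R₄(P)+h₄))]. -/
theorem stmt_15 (h1 h4 P : ℝ) (hh1 : 0 < h1) (hh4 : 0 < h4) (hP : 0 < P) :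
    (∫ p in (0:ℝ)..P,
        (1 / (p ^ 2 + h1 ^ 2)) *
          (1 / (Real.sqrt (p ^ 2 + (h1 ^ 2 + h4 ^ 2)) + h4)
            - (1 / Real.sqrt (p ^ 2 + h1 ^ 2)) *
                Real.log ((Real.sqrt (p ^ 2 + h1 ^ 2)
                    + Real.sqrt (p ^ 2 + (h1 ^ 2 + h4 ^ 2))) / h4)
            + 1 / (2 * h4)))
      = (1 / h1 ^ 2) *
          (Real.log ((P + Real.sqrt (P ^ 2 + (h1 ^ 2 + h4 ^ 2)))
                / Real.sqrt (h1 ^ 2 + h4 ^ 2))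
            + ((h1 ^ 2 - h4 ^ 2) / (2 * h1 * h4)) *
                Real.arctan (h1 * P
                  / ((h1 ^ 2 + h4 ^ 2) + h4 * Real.sqrt (P ^ 2 + (h1 ^ 2 + h4 ^ 2))))
            - (P / Real.sqrt (P ^ 2 + h1 ^ 2)) *
                Real.log ((Real.sqrt (P ^ 2 + h1 ^ 2)
                    + Real.sqrt (P ^ 2 + (h1 ^ 2 + h4 ^ 2))) / h4)
            + P / (2 * (Real.sqrt (P ^ 2 + (h1 ^ 2 + h4 ^ 2)) + h4))) :=
  stmt_15_general h1 h4 P hh1 hh4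
end
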